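/- Let k ≥ 3 and suppose m ≤ c_k* n. Then the probability that H*_{n,m,k} has Property 𝓔 tends to 1 as n → ∞. -/

import Mathlib

open Filter Real

attribute [local instance] Classical.propDecidable

/-- Probability, under the uniform measure on `H*_{n,m,k}` outcomes (an outcome is the
sequence of `m` ordered `k`-tuples of vertices, each tuple uniform on `(Fin n)^k`),
that the resulting multihypergraph satisfies `P`. -/
noncomputable def probStar (n m k : ℕ) (P : (Fin m → Fin k → Fin n) → Prop) : ℝ :=
  ((Finset.univ.filter P).card : ℝ) / (Fintype.card (Fin m → Fin k → Fin n) : ℝ)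

/-- The set of vertices contained in the edges of `E'`. -/
def edgeVerts {n m k : ℕ} (ω : Fin m → Fin k → Fin n) (E' : Finset (Fin m)) : Finset (Fin n) :=
  E'.biUnion (fun i => Finset.image (ω i) Finset.univ)

/-- `x_s = log_k((k-1)e^k) / (log_k(n/s) - 1)`. -/
noncomputable def xval (k n : ℕ) (s : ℝ) : ℝ :=
  Real.logb k (((k : ℝ) - 1) * Real.exp k) / (Real.logb k ((n : ℝ) / s) - 1)

/-- Property `𝓔`: (1) every edge set `E'` with `log log n < |E'| < n/k` spans at least
`(k-1-x_{|E'|})|E'|` vertices; (2) every edge set `E'` with `|E'| ≤ log log n` spans at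
least `(k-1)|E'|` vertices. -/
def PropE {n m k : ℕ} (ω : Fin m → Fin k → Fin n) : Prop :=
  (∀ E' : Finset (Fin m),
    Real.log (Real.log n) < (E'.card : ℝ) → (E'.card : ℝ) < (n : ℝ) / k →
      ((k : ℝ) - 1 - xval k n E'.card) * E'.card ≤ ((edgeVerts ω E').card : ℝ)) ∧
  (∀ E' : Finset (Fin m), (E'.card : ℝ) ≤ Real.log (Real.log n) →
      ((k : ℝ) - 1) * E'.card ≤ ((edgeVerts ω E').card : ℝ))

/-!
First-moment method. A fixed set of `s` edges spans at most `v` vertices with probability at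
most `C(n, v) (v/n)^{ks}`, so `H*` fails Property `𝓔` with probability at most
`∑_s C(m, s) C(n, v_s) (v_s/n)^{ks}`, with `v_s` the largest span violating `𝓔`. For
`s ≤ log log n`, `v_s = (k-1)s - 1` and the term is `e^{O((log log n)^2)} / n`. For larger `s`,
`x_s` is exactly what makes the term at most `c^s` when `m ≤ c n`, and these terms are summable
since `c_k* < 1`, which holds because `ξ*` lies in `(k-1, k)`.
-/

open Finset Topology

lemma one_add_pow_lt_one_add_mul {δ : ℝ} {n : ℕ} (hn : 1 ≤ n) (hδ : 0 < δ)
    (h : n * (n + 1) * δ < 1) : (1 + δ) ^ n < 1 + (n + 1) * δ := by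
  have hn' : (1 : ℝ) ≤ n := by exact_mod_cast hn
  have hnδ : n * δ < 1 := by nlinarith
  calc (1 + δ) ^ n ≤ exp δ ^ n := by
        gcongr
        linarith [add_one_le_exp δ]
    _ = exp (n * δ) := (exp_nat_mul δ n).symm
    _ < 1 / (1 - n * δ) := exp_bound_div_one_sub_of_interval' (by positivity) hnδ
    _ ≤ 1 + (n + 1) * δ := by
        rw [div_le_iff₀ (by linarith)]
        nlinarith

lemma sq_add_add_one_lt_exp {u : ℝ} (hu : 2 ≤ u) : u ^ 2 + u + 1 < exp u := by
  have h := sum_le_exp_of_nonneg (by linarith : 0 ≤ u) 6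
  norm_num [sum_range_succ, Nat.factorial] at h
  nlinarith [pow_pos (by linarith : (0 : ℝ) < u) 3, pow_pos (by linarith : (0 : ℝ) < u) 4,
    pow_pos (by linarith : (0 : ℝ) < u) 5]

lemma exists_mem_Ioo_exp_neg_mul_eq {k : ℝ} (hk : 3 ≤ k) :
    ∃ r ∈ Set.Ioo (k - 1) k, exp (-r) * (k + (k - 1) * r) = k - r := by
  let G : ℝ → ℝ := fun t => exp (-t) * (k + (k - 1) * t) - (k - t)
  have hG_left : G (k - 1) < 0 := by
    have h := sq_add_add_one_lt_exp (by linarith : 2 ≤ k - 1)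
    have : exp (-(k - 1)) * (k + (k - 1) * (k - 1)) < 1 := by
      rw [exp_neg, inv_mul_lt_iff₀ (exp_pos _)]
      nlinarith
    simp only [G]
    linarith
  have hG_right : 0 < G k := by
    simp only [G, sub_self, sub_zero]
    have : 0 < k + (k - 1) * k := by nlinarith
    positivity
  obtain ⟨r, hr, hr0⟩ := intermediate_value_Ioo (by linarith : k - 1 ≤ k)
    (by fun_prop : Continuous G).continuousOn ⟨hG_left, hG_right⟩
  exact ⟨r, hr, by simp only [G] at hr0; linarith⟩

lemma eq_div_of_exp_neg_mul_eq {k t : ℝ} (ht : 0 < t)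
    (h : exp (-t) * (k + (k - 1) * t) = k - t) :
    k = t * (1 - exp (-t)) / (1 - exp (-t) - t * exp (-t)) := by
  have hden : 0 < 1 - exp (-t) - t * exp (-t) := by
    have h1 := add_one_lt_exp ht.ne'
    have h2 : exp (-t) * exp t = 1 := by rw [← exp_add]; simp
    nlinarith [exp_pos (-t)]
  rw [eq_div_iff hden.ne']
  linarith

/-- With `θ = 1 - e^{-r} = k r / (k + (k-1) r)` and `1 + δ = 1/θ`, this is
`(1 + δ)^{k-1} < 1 + k δ = k / r`, and `δ = (k - r) / (k r)` is small because `r > k - 1`. -/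
lemma lt_mul_one_sub_exp_neg_pow {k : ℕ} (hk : 2 ≤ k) {r : ℝ} (hr : r ∈ Set.Ioo (k - 1 : ℝ) k)
    (h : exp (-r) * (k + (k - 1) * r) = k - r) :
    r < k * (1 - exp (-r)) ^ (k - 1) := by
  obtain ⟨hr1, hr2⟩ := hr
  have hk' : (2 : ℝ) ≤ k := by exact_mod_cast hk
  have hr0 : 0 < r := by linarith
  have ha : 0 < k + (k - 1) * r := by nlinarith
  set δ : ℝ := (k - r) / (k * r) with hδ_def
  have hδ : 0 < δ := div_pos (by linarith) (by positivity)
  have hθ : 1 - exp (-r) = (1 + δ)⁻¹ := by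
    have he : exp (-r) = (k - r) / (k + (k - 1) * r) := by rw [eq_div_iff ha.ne']; linarith
    have h1δ : 1 + δ = (k + (k - 1) * r) / (k * r) := by rw [hδ_def]; field_simp; ring
    rw [he, h1δ, inv_div, eq_div_iff (by positivity), sub_mul, div_mul_cancel₀ _ ha.ne']
    ring
  have hcast : ((k - 1 : ℕ) : ℝ) = k - 1 := by rw [Nat.cast_sub (by omega)]; simp
  have hpow : (1 + δ) ^ (k - 1) < 1 + k * δ := by
    have hsmall : (k - 1) * k * δ < 1 := by
      rw [hδ_def, mul_div_assoc', div_lt_one (by positivity)]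
      nlinarith [mul_lt_mul_of_pos_left hr1 (by positivity : (0 : ℝ) < k)]
    have := one_add_pow_lt_one_add_mul (n := k - 1) (by omega) hδ
      (by rwa [hcast, sub_add_cancel])
    rwa [hcast, sub_add_cancel] at this
  have hkδ : 1 + k * δ = k / r := by rw [hδ_def]; field_simp; ring
  rw [hθ, inv_pow, ← div_eq_mul_inv, lt_div_iff₀ (by positivity)]
  rw [hkδ, lt_div_iff₀ hr0] at hpow
  linarith

lemma ck_mem_Ioo {k : ℕ} (hk : 3 ≤ k) {ξ ck : ℝ}
    (hξuniq : ∀ y : ℝ, 0 < y →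
      (k : ℝ) = y * (1 - exp (-y)) / (1 - exp (-y) - y * exp (-y)) → y = ξ)
    (hck : ck = ξ / (k * (1 - exp (-ξ)) ^ (k - 1))) :
    0 < ck ∧ ck < 1 := by
  obtain ⟨r, hr, hroot⟩ := exists_mem_Ioo_exp_neg_mul_eq (k := k) (by exact_mod_cast hk)
  have hr0 : 0 < r := by
    have : (3 : ℝ) ≤ k := by exact_mod_cast hk
    linarith [hr.1]
  obtain rfl := hξuniq r hr0 (eq_div_of_exp_neg_mul_eq hr0 hroot)
  have hθ : 0 < 1 - exp (-r) := by linarith [exp_lt_one_iff.mpr (neg_lt_zero.mpr hr0)]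
  subst hck
  exact ⟨by positivity,
    (div_lt_one (by positivity)).mpr (lt_mul_one_sub_exp_neg_pow (by omega) hr hroot)⟩

section ProbStar

variable {n m k : ℕ}

lemma card_outcomes : Fintype.card (Fin m → Fin k → Fin n) = n ^ (k * m) := by
  simp only [Fintype.card_fun, Fintype.card_fin, ← pow_mul, mul_comm]

-- `probStar` filters with `Classical.propDecidable`; this form accepts any instance.
lemma probStar_eq_card_div (P : (Fin m → Fin k → Fin n) → Prop) [DecidablePred P] :
    probStar n m k P = #(univ.filter P) / (n : ℝ) ^ (k * m) := by
  unfold probStar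
  rw [card_outcomes, Nat.cast_pow]
  congr 3
  exact filter_congr_decidable _ _ _

lemma probStar_nonneg (P : (Fin m → Fin k → Fin n) → Prop) : 0 ≤ probStar n m k P := by
  unfold probStar
  positivity

lemma probStar_mono {P Q : (Fin m → Fin k → Fin n) → Prop} (h : ∀ ω, P ω → Q ω) :
    probStar n m k P ≤ probStar n m k Q := by
  unfold probStar
  gcongr
  exact h _

lemma probStar_le_sum {ι : Type*} (s : Finset ι) {P : (Fin m → Fin k → Fin n) → Prop}
    {Q : ι → (Fin m → Fin k → Fin n) → Prop} (h : ∀ ω, P ω → ∃ i ∈ s, Q i ω) :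
    probStar n m k P ≤ ∑ i ∈ s, probStar n m k (Q i) := by
  unfold probStar
  rw [← sum_div]
  gcongr
  calc (#(univ.filter P) : ℝ) ≤ #(s.biUnion fun i => univ.filter (Q i)) := by
        gcongr
        intro ω hω
        obtain ⟨i, hi, hQ⟩ := h ω (mem_filter.mp hω).2
        exact mem_biUnion.mpr ⟨i, hi, mem_filter.mpr ⟨mem_univ _, hQ⟩⟩
    _ ≤ ∑ i ∈ s, (#(univ.filter (Q i)) : ℝ) := by exact_mod_cast card_biUnion_le

lemma probStar_add_probStar_not (hn : 0 < n) (P : (Fin m → Fin k → Fin n) → Prop) :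
    probStar n m k P + probStar n m k (fun ω => ¬ P ω) = 1 := by
  have hcard : (0 : ℝ) < (n : ℝ) ^ (k * m) := by positivity
  rw [probStar_eq_card_div, probStar_eq_card_div, ← add_div, div_eq_one_iff_eq hcard.ne',
    ← Nat.cast_pow, ← card_outcomes, ← card_univ]
  exact_mod_cast card_filter_add_card_filter_not (s := univ) P

lemma probStar_forall_mem (hn : 0 < n) (E' : Finset (Fin m)) (S : Finset (Fin n)) :
    probStar n m k (fun ω => ∀ i ∈ E', ∀ j, ω i j ∈ S) = ((#S : ℝ) / n) ^ (k * #E') := by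
  have hfilter : univ.filter (fun ω : Fin m → Fin k → Fin n => ∀ i ∈ E', ∀ j, ω i j ∈ S)
      = Fintype.piFinset (fun i => if i ∈ E' then Fintype.piFinset (fun _ => S) else univ) := by
    ext ω
    simp only [mem_filter, mem_univ, true_and, Fintype.mem_piFinset]
    refine ⟨fun h i => ?_, fun h i hi => ?_⟩
    · split_ifs with hi
      · exact Fintype.mem_piFinset.mpr (h i hi)
      · exact mem_univ _
    · simpa [hi] using h i
  have hn' : (0 : ℝ) < n := by exact_mod_cast hn
  rw [probStar_eq_card_div, hfilter, Fintype.card_piFinset, Nat.cast_prod, pow_mul,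
    ← Fin.prod_const, ← prod_div_distrib]
  calc ∏ i, ((if i ∈ E' then Fintype.piFinset (fun _ : Fin k => S) else univ).card : ℝ)
          / (n : ℝ) ^ k
      = ∏ i, if i ∈ E' then ((#S : ℝ) / n) ^ k else 1 := by
        refine prod_congr rfl fun i _ => ?_
        split_ifs
        · simp [div_pow]
        · simp [hn'.ne']
    _ = ((#S : ℝ) / n) ^ (k * #E') := by
        rw [prod_ite_mem, univ_inter, prod_const, ← pow_mul]

lemma probStar_card_edgeVerts_le (hn : 0 < n) (E' : Finset (Fin m)) {v : ℕ} (hv : v ≤ n) :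
    probStar n m k (fun ω => #(edgeVerts ω E') ≤ v)
      ≤ n.choose v * ((v : ℝ) / n) ^ (k * #E') := by
  calc probStar n m k (fun ω => #(edgeVerts ω E') ≤ v)
      ≤ ∑ S ∈ powersetCard v (univ : Finset (Fin n)),
          probStar n m k (fun ω => ∀ i ∈ E', ∀ j, ω i j ∈ S) := by
        refine probStar_le_sum _ fun ω hω => ?_
        obtain ⟨S, hVS, hSu, hS⟩ :=
          exists_subsuperset_card_eq (subset_univ (edgeVerts ω E')) hω (by simpa using hv)
        refine ⟨S, mem_powersetCard.mpr ⟨hSu, hS⟩, fun i hi j => hVS ?_⟩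
        exact mem_biUnion.mpr ⟨i, hi, mem_image_of_mem _ (mem_univ j)⟩
    _ = n.choose v * ((v : ℝ) / n) ^ (k * #E') := by
        rw [sum_congr rfl fun S hS => by
            rw [probStar_forall_mem hn, (mem_powersetCard.mp hS).2],
          sum_const, card_powersetCard, card_univ, Fintype.card_fin, nsmul_eq_mul]

end ProbStar

lemma choose_mul_pow_le_pow_mul_exp (a b : ℕ) :
    (a.choose b : ℝ) * (b : ℝ) ^ b ≤ (a : ℝ) ^ b * exp b := by
  have h1 : (a.choose b : ℝ) ≤ (a : ℝ) ^ b / b.factorial := Nat.choose_le_pow_div b a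
  have h2 : (b : ℝ) ^ b ≤ exp b * b.factorial := by
    have := pow_div_factorial_le_exp (x := (b : ℝ)) (Nat.cast_nonneg b) b
    rwa [div_le_iff₀ (by positivity)] at this
  calc (a.choose b : ℝ) * (b : ℝ) ^ b ≤ (a : ℝ) ^ b / b.factorial * (exp b * b.factorial) := by
        gcongr
    _ = (a : ℝ) ^ b * exp b := by field_simp

section Regimes

variable {k n : ℕ}

lemma one_lt_logb_div (hk : 2 ≤ k) {s : ℝ} (hs : 0 < s) (hks : k * s < n) :
    1 < logb k (n / s) := by
  have hk' : (2 : ℝ) ≤ k := by exact_mod_cast hk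
  have hn : (0 : ℝ) < n := by nlinarith
  rw [lt_logb_iff_rpow_lt (by linarith) (by positivity), rpow_one, lt_div_iff₀ hs]
  exact hks

lemma xval_pos (hk : 2 ≤ k) {s : ℝ} (hs : 0 < s) (hks : k * s < n) : 0 < xval k n s := by
  have hk' : (2 : ℝ) ≤ k := by exact_mod_cast hk
  refine div_pos (logb_pos (by linarith) ?_) (sub_pos.mpr (one_lt_logb_div hk hs hks))
  nlinarith [add_one_le_exp (k : ℝ), exp_pos (k : ℝ)]

lemma xval_mul_log_sub_log (hk : 2 ≤ k) {s : ℝ} (hs : 0 < s) (hks : k * s < n) :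
    xval k n s * (log (n / s) - log k) = log (k - 1) + k := by
  have hk' : (2 : ℝ) ≤ k := by exact_mod_cast hk
  have hlogk : log k ≠ 0 := (log_pos (by linarith)).ne'
  have hden := (sub_pos.mpr (one_lt_logb_div hk hs hks)).ne'
  have hsplit : log (n / s) - log k = log k * (logb k (n / s) - 1) := by
    rw [logb]; field_simp
  rw [xval, hsplit, logb, log_mul (by linarith) (exp_pos _).ne', log_exp]
  field_simp

lemma choose_mul_choose_mul_div_pow_le_exp_div (hk : 2 ≤ k) {m s : ℕ} (hs : 1 ≤ s) (hn : 0 < n)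
    (hmn : m ≤ n) :
    (m.choose s : ℝ) * n.choose ((k - 1) * s - 1) * ((((k - 1) * s - 1 : ℕ) : ℝ) / n) ^ (k * s)
      ≤ exp (k * (k - 1) * s ^ 2) / n := by
  set v := (k - 1) * s - 1
  have hsum : s + v + 1 = k * s := by
    have h1 : 0 < (k - 1) * s := Nat.mul_pos (by omega) hs
    have h2 : (k - 1) * s + s = k * s := by rw [← add_one_mul, Nat.sub_add_cancel (by omega)]
    omega
  have hvs : (v : ℝ) ≤ (k - 1) * s := by
    have h := (Nat.cast_le (α := ℝ)).mpr (Nat.sub_le ((k - 1) * s) 1)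
    rwa [Nat.cast_mul, Nat.cast_sub (by omega : 1 ≤ k), Nat.cast_one] at h
  have hn' : (0 : ℝ) < n := by exact_mod_cast hn
  have hexp : (v : ℝ) ^ (k * s) ≤ exp (k * (k - 1) * s ^ 2) :=
    calc (v : ℝ) ^ (k * s) ≤ exp v ^ (k * s) := by gcongr; linarith [add_one_le_exp (v : ℝ)]
      _ = exp ((k * s : ℕ) * v) := (exp_nat_mul _ _).symm
      _ ≤ exp (k * (k - 1) * s ^ 2) := by
        rw [exp_le_exp]
        push_cast
        nlinarith [hvs, (by positivity : (0 : ℝ) ≤ k * s)]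
  have hpow : (n : ℝ) ^ (k * s) = n ^ s * n ^ v * n := by rw [← hsum, pow_succ, pow_add]
  calc (m.choose s : ℝ) * n.choose v * ((v : ℝ) / n) ^ (k * s)
      = m.choose s * n.choose v * (v : ℝ) ^ (k * s) / (n ^ s * n ^ v * n) := by
        rw [div_pow, hpow, mul_div_assoc]
    _ ≤ n ^ s * n ^ v * exp (k * (k - 1) * s ^ 2) / (n ^ s * n ^ v * n) := by
        have hm : (m.choose s : ℝ) ≤ n ^ s :=
          (by exact_mod_cast Nat.choose_le_pow m s : (m.choose s : ℝ) ≤ m ^ s).trans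
            (pow_le_pow_left₀ (by positivity) (by exact_mod_cast hmn) s)
        have hnC : (n.choose v : ℝ) ≤ n ^ v := by exact_mod_cast Nat.choose_le_pow n v
        gcongr
    _ = exp (k * (k - 1) * s ^ 2) / n := by field_simp

lemma mul_one_add_log_add_mul_log_le {V T K N : ℝ} (hV : 0 < V) (hVT : V ≤ T) (hTK : T ≤ K)
    (hTN : T ≤ N) :
    V * (1 + log N - log V) + K * (log V - log N)
      ≤ T * (1 + log N - log T) + K * (log T - log N) := by
  have hVT' : log V ≤ log T := log_le_log hV hVT
  have hVN : log V ≤ log N + 1 := by linarith [log_le_log hV (hVT.trans hTN)]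
  nlinarith [mul_nonneg (sub_nonneg.mpr hVT) (by linarith : 0 ≤ 1 + log N - log V),
    mul_nonneg (sub_nonneg.mpr hTK) (sub_nonneg.mpr hVT')]

/-- The left side is the logarithm of `(e N/S)^S (e N/V)^V (V/N)^{kS}`; `x = x_S` is defined
precisely so that it is nonpositive. -/
lemma log_bound_of_le_threshold {k S V N x : ℝ} (hk : 2 ≤ k) (hS : 0 < S) (hV : 0 < V)
    (hx : 0 < x) (hVT : V ≤ (k - 1 - x) * S) (hN : k * S < N)
    (hxdef : x * (log (N / S) - log k) = log (k - 1) + k) :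
    S * (1 + log N - log S) + V * (1 + log N - log V) + k * S * (log V - log N) ≤ 0 := by
  set T := (k - 1 - x) * S
  have hT : 0 < T := hV.trans_le hVT
  have hTk1 : T ≤ (k - 1) * S := by nlinarith
  have hmono := mul_one_add_log_add_mul_log_le (K := k * S) (N := N) hV hVT
    (by nlinarith) (by nlinarith)
  have hlogT : log T ≤ log (k - 1) + log S := by
    rw [← log_mul (by linarith) hS.ne']
    exact log_le_log hT hTk1
  have hlogk : log (k - 1) ≤ log k := log_le_log (by linarith) (by linarith)
  rw [log_div (by nlinarith) hS.ne'] at hxdef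
  have hkT : k * S - T = (1 + x) * S := by ring
  nlinarith [mul_le_mul_of_nonneg_left hlogT (by nlinarith : 0 ≤ k * S - T),
    mul_nonneg hS.le (mul_nonneg hx.le (sub_nonneg.mpr hlogk))]

lemma choose_mul_choose_mul_div_pow_le_pow (hk : 2 ≤ k) {m s v : ℕ} {c : ℝ} (hs : 1 ≤ s)
    (hks : (k : ℝ) * s < n) (hc : 0 < c) (hm : (m : ℝ) ≤ c * n)
    (hv : (v : ℝ) ≤ (k - 1 - xval k n s) * s) :
    (m.choose s : ℝ) * n.choose v * ((v : ℝ) / n) ^ (k * s) ≤ c ^ s := by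
  rcases Nat.eq_zero_or_pos v with rfl | hv0
  · rw [Nat.cast_zero, zero_div, zero_pow (by positivity), mul_zero]
    positivity
  have hk' : (2 : ℝ) ≤ k := by exact_mod_cast hk
  have hs' : (0 : ℝ) < s := by exact_mod_cast hs
  have hv' : (0 : ℝ) < v := by exact_mod_cast hv0
  have hn : (0 : ℝ) < n := by nlinarith
  have hpow : ∀ {a : ℝ}, 0 < a → ∀ j : ℕ, a ^ j = exp (j * log a) := fun ha j => by
    rw [← rpow_natCast, rpow_def_of_pos ha, mul_comm]
  have hmC : (m.choose s : ℝ) ≤ (c * n) ^ s * exp s / s ^ s := by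
    rw [le_div_iff₀ (by positivity)]
    exact (choose_mul_pow_le_pow_mul_exp m s).trans (by gcongr)
  have hnC : (n.choose v : ℝ) ≤ (n : ℝ) ^ v * exp v / v ^ v := by
    rw [le_div_iff₀ (by positivity)]
    exact choose_mul_pow_le_pow_mul_exp n v
  have hlog := log_bound_of_le_threshold (by linarith) hs' hv' (xval_pos hk hs' hks) hv hks
    (xval_mul_log_sub_log hk hs' hks)
  calc (m.choose s : ℝ) * n.choose v * ((v : ℝ) / n) ^ (k * s)
      ≤ (c * n) ^ s * exp s / s ^ s * ((n : ℝ) ^ v * exp v / v ^ v)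
          * ((v : ℝ) / n) ^ (k * s) := by
        gcongr
    _ = c ^ s * exp (s * (1 + log n - log s) + v * (1 + log n - log v)
          + k * s * (log v - log n)) := by
        rw [mul_pow, div_pow, hpow hn s, hpow hs' s, hpow hn v, hpow hv' v, hpow hv' (k * s),
          hpow hn (k * s)]
        simp only [div_eq_mul_inv, ← exp_neg, mul_assoc, ← exp_add]
        congr 2
        push_cast
        ring
    _ ≤ c ^ s := mul_le_of_le_one_right (by positivity) (exp_le_one_iff.mpr hlog)

end Regimes

-- The span Property `𝓔` demands of `s` edges; `0` where it demands nothing.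
noncomputable def spanBound (k n s : ℕ) : ℝ :=
  if (s : ℝ) ≤ log (log n) then (k - 1) * s
  else if (s : ℝ) < n / k then (k - 1 - xval k n s) * s else 0

section FirstMoment

variable {n m k : ℕ}

lemma exists_card_edgeVerts_lt_of_not_PropE {ω : Fin m → Fin k → Fin n} (h : ¬ PropE ω) :
    ∃ E' : Finset (Fin m), (#(edgeVerts ω E') : ℝ) < spanBound k n #E' := by
  rw [PropE, not_and_or] at h
  rcases h with h | h
  · obtain ⟨E', hL, hnk, hlt⟩ : ∃ E' : Finset (Fin m), log (log n) < #E' ∧ (#E' : ℝ) < n / k ∧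
        (#(edgeVerts ω E') : ℝ) < (k - 1 - xval k n #E') * #E' := by simpa using h
    exact ⟨E', by rwa [spanBound, if_neg hL.not_ge, if_pos hnk]⟩
  · obtain ⟨E', hL, hlt⟩ : ∃ E' : Finset (Fin m), (#E' : ℝ) ≤ log (log n) ∧
        (#(edgeVerts ω E') : ℝ) < (k - 1) * #E' := by simpa using h
    exact ⟨E', by rwa [spanBound, if_pos hL]⟩

lemma probStar_eq_zero {P : (Fin m → Fin k → Fin n) → Prop} (h : ∀ ω, ¬ P ω) :
    probStar n m k P = 0 := by
  unfold probStar
  rw [filter_false_of_mem fun ω _ => h ω, card_empty, Nat.cast_zero, zero_div]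

lemma probStar_not_PropE_le_sum :
    probStar n m k (fun ω => ¬ PropE ω) ≤ ∑ s ∈ range (m + 1), ∑ E' ∈ powersetCard s univ,
      probStar n m k (fun ω => (#(edgeVerts ω E') : ℝ) < spanBound k n s) := by
  calc probStar n m k (fun ω => ¬ PropE ω)
      ≤ ∑ s ∈ range (m + 1), probStar n m k (fun ω => ∃ E' ∈ powersetCard s univ,
          (#(edgeVerts ω E') : ℝ) < spanBound k n s) := by
        refine probStar_le_sum _ fun ω hω => ?_
        obtain ⟨E', hE'⟩ := exists_card_edgeVerts_lt_of_not_PropE hω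
        refine ⟨#E', mem_range.mpr (Nat.lt_succ_of_le ?_), E', mem_powersetCard_univ.mpr rfl, hE'⟩
        simpa using card_le_univ E'
    _ ≤ _ := sum_le_sum fun s _ => probStar_le_sum _ fun ω hω => hω

lemma sum_probStar_card_edgeVerts_lt_le (hn : 0 < n) (s : ℕ) {v : ℕ} (hv : v ≤ n) {t : ℝ}
    (ht : ∀ j : ℕ, (j : ℝ) < t → j ≤ v) :
    ∑ E' ∈ powersetCard s (univ : Finset (Fin m)),
        probStar n m k (fun ω => (#(edgeVerts ω E') : ℝ) < t)
      ≤ m.choose s * n.choose v * ((v : ℝ) / n) ^ (k * s) := by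
  calc ∑ E' ∈ powersetCard s (univ : Finset (Fin m)),
        probStar n m k (fun ω => (#(edgeVerts ω E') : ℝ) < t)
      ≤ #(powersetCard s (univ : Finset (Fin m))) • (n.choose v * ((v : ℝ) / n) ^ (k * s)) := by
        refine sum_le_card_nsmul _ _ _ fun E' hE' => ?_
        rw [← (mem_powersetCard.mp hE').2]
        exact (probStar_mono fun ω hω => ht _ hω).trans (probStar_card_edgeVerts_le hn E' hv)
    _ = m.choose s * n.choose v * ((v : ℝ) / n) ^ (k * s) := by
        rw [card_powersetCard, card_univ, Fintype.card_fin, nsmul_eq_mul, mul_assoc]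

lemma sum_probStar_lt_spanBound_le_exp_div (hn : 0 < n) (hk : 2 ≤ k) (hmn : m ≤ n) {s : ℕ}
    (hs : 1 ≤ s) (hsL : (s : ℝ) ≤ log (log n)) (hLn : (k - 1) * log (log n) ≤ n) :
    ∑ E' ∈ powersetCard s (univ : Finset (Fin m)),
        probStar n m k (fun ω => (#(edgeVerts ω E') : ℝ) < spanBound k n s)
      ≤ exp (k * (k - 1) * s ^ 2) / n := by
  have hcast : (((k - 1) * s : ℕ) : ℝ) = (k - 1) * s := by
    rw [Nat.cast_mul, Nat.cast_sub (by omega), Nat.cast_one]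
  have hvn : (k - 1) * s - 1 ≤ n := by
    have : (((k - 1) * s : ℕ) : ℝ) ≤ n := by
      rw [hcast]
      exact (mul_le_mul_of_nonneg_left hsL (by norm_num; omega)).trans hLn
    exact (Nat.sub_le _ _).trans (by exact_mod_cast this)
  refine (sum_probStar_card_edgeVerts_lt_le hn s hvn fun j hj => ?_).trans
    (choose_mul_choose_mul_div_pow_le_exp_div hk hs hn hmn)
  rw [spanBound, if_pos hsL, ← hcast, Nat.cast_lt] at hj
  omega

lemma sum_probStar_lt_spanBound_le_pow (hn : 0 < n) (hk : 2 ≤ k) {c : ℝ} (hc : 0 < c)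
    (hm : (m : ℝ) ≤ c * n) {s : ℕ} (hsL : log (log n) < s) :
    ∑ E' ∈ powersetCard s (univ : Finset (Fin m)),
        probStar n m k (fun ω => (#(edgeVerts ω E') : ℝ) < spanBound k n s)
      ≤ c ^ s := by
  by_cases hpos : spanBound k n s ≤ 0
  · rw [sum_eq_zero fun E' _ => probStar_eq_zero fun ω hω =>
      (hω.trans_le hpos).not_ge (Nat.cast_nonneg _)]
    positivity
  have hsn : (s : ℝ) < n / k := by
    by_contra h
    simp [spanBound, hsL.not_ge, h] at hpos
  have ht : spanBound k n s = (k - 1 - xval k n s) * s := by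
    rw [spanBound, if_neg hsL.not_ge, if_pos hsn]
  have hs : 1 ≤ s := by
    rcases Nat.eq_zero_or_pos s with rfl | h
    · rw [ht, Nat.cast_zero, mul_zero] at hpos
      exact absurd le_rfl hpos
    · exact h
  have hk' : (2 : ℝ) ≤ k := by exact_mod_cast hk
  have hks : (k : ℝ) * s < n := by rwa [lt_div_iff₀ (by positivity), mul_comm] at hsn
  have hvt : (⌊spanBound k n s⌋₊ : ℝ) ≤ spanBound k n s := Nat.floor_le (not_le.mp hpos).le
  have hvn : ⌊spanBound k n s⌋₊ ≤ n := by
    have hx := xval_pos hk (by exact_mod_cast hs) hks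
    have htn : spanBound k n s ≤ n := by rw [ht]; nlinarith
    exact_mod_cast hvt.trans htn
  refine (sum_probStar_card_edgeVerts_lt_le hn s hvn fun j hj => Nat.le_floor hj.le).trans ?_
  exact choose_mul_choose_mul_div_pow_le_pow hk hs hks hc hm (ht ▸ hvt)

lemma sum_range_ite_le {L A c : ℝ} (hL : 0 ≤ L) (hA : 0 ≤ A) (hc0 : 0 ≤ c) (hc1 : c < 1)
    (N : ℕ) :
    ∑ s ∈ range N, (if (s : ℝ) ≤ L then A else c ^ s)
      ≤ (L + 1) * A + c ^ (⌊L⌋₊ + 1) / (1 - c) := by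
  rw [sum_ite, sum_const, nsmul_eq_mul]
  gcongr
  · calc (#((range N).filter fun s : ℕ => (s : ℝ) ≤ L) : ℝ) ≤ #(range (⌊L⌋₊ + 1)) := by
          gcongr
          intro s hs
          exact mem_range.mpr (Nat.lt_succ_of_le (Nat.le_floor (mem_filter.mp hs).2))
      _ ≤ L + 1 := by
          rw [card_range, Nat.cast_succ]
          linarith [Nat.floor_le hL]
  · calc ∑ s ∈ (range N).filter (fun s : ℕ => ¬ (s : ℝ) ≤ L), c ^ s
        ≤ ∑ s ∈ Ico (⌊L⌋₊ + 1) N, c ^ s := by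
          refine sum_le_sum_of_subset_of_nonneg (fun s hs => ?_) fun _ _ _ => by positivity
          obtain ⟨hsN, hsL⟩ := mem_filter.mp hs
          exact mem_Ico.mpr ⟨(Nat.floor_lt hL).mpr (not_le.mp hsL), mem_range.mp hsN⟩
      _ ≤ c ^ (⌊L⌋₊ + 1) / (1 - c) := geom_sum_Ico_le_of_lt_one hc0 hc1

lemma probStar_not_PropE_le (hn : 0 < n) (hk : 2 ≤ k) {c : ℝ} (hc0 : 0 < c) (hc1 : c < 1)
    (hm : (m : ℝ) ≤ c * n) (hL : 0 ≤ log (log n)) (hLn : (k - 1) * log (log n) ≤ n) :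
    probStar n m k (fun ω => ¬ PropE ω)
      ≤ (log (log n) + 1) * (exp (k * (k - 1) * log (log n) ^ 2) / n)
        + c ^ (⌊log (log n)⌋₊ + 1) / (1 - c) := by
  have hn' : (0 : ℝ) < n := by exact_mod_cast hn
  have hmn : m ≤ n := by
    have : (m : ℝ) ≤ n := hm.trans (by nlinarith)
    exact_mod_cast this
  refine probStar_not_PropE_le_sum.trans ((sum_le_sum fun s _ => ?_).trans
    (sum_range_ite_le hL (by positivity) hc0.le hc1 (m + 1)))
  split_ifs with hsL
  · rcases Nat.eq_zero_or_pos s with rfl | hs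
    · rw [sum_eq_zero fun E' _ => probStar_eq_zero fun ω hω => ?_]
      · positivity
      · simp only [spanBound, Nat.cast_zero, mul_zero, ite_self] at hω
        exact hω.not_ge (Nat.cast_nonneg _)
    refine (sum_probStar_lt_spanBound_le_exp_div hn hk hmn hs hsL hLn).trans ?_
    have hk1 : (0 : ℝ) ≤ k * (k - 1) := by
      have : (2 : ℝ) ≤ k := by exact_mod_cast hk
      nlinarith
    gcongr
  · exact sum_probStar_lt_spanBound_le_pow hn hk hc0 hm (not_le.mp hsL)

end FirstMoment

lemma tendsto_loglog_atTop : Tendsto (fun n : ℕ => log (log n)) atTop atTop :=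
  (tendsto_log_atTop.comp tendsto_log_atTop).comp tendsto_natCast_atTop_atTop

lemma tendsto_mul_log_sq_sub_atBot (K : ℝ) :
    Tendsto (fun u : ℝ => K * log u ^ 2 - u) atTop atBot := by
  have hlog : Tendsto (fun u : ℝ => K * (log u ^ 2 / u) - 1) atTop (𝓝 (-1)) := by
    simpa using ((tendsto_pow_log_div_mul_add_atTop 1 0 2 one_ne_zero).const_mul K).sub_const 1
  refine (tendsto_id.atTop_mul_neg (by norm_num) hlog).congr' ?_
  filter_upwards [eventually_gt_atTop 0] with u hu
  simp only [id]
  field_simp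

lemma eventually_mul_loglog_le (a : ℝ) : ∀ᶠ n : ℕ in atTop, a * log (log n) ≤ n := by
  have hlog := tendsto_log_atTop.comp (tendsto_natCast_atTop_atTop (R := ℝ))
  have hsq := (tendsto_mul_log_sq_sub_atBot |a|).comp (tendsto_natCast_atTop_atTop (R := ℝ))
  filter_upwards [hsq.eventually_le_atBot 0, hlog.eventually_ge_atTop 1,
      tendsto_loglog_atTop.eventually_ge_atTop 0] with n hn hlogn hL
  simp only [Function.comp_apply, sub_nonpos] at hn hlogn
  calc a * log (log n) ≤ |a| * log (log n) := mul_le_mul_of_nonneg_right (le_abs_self a) hL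
    _ ≤ |a| * log n ^ 2 := by
      gcongr
      exact (log_le_self (by linarith)).trans (by nlinarith)
    _ ≤ n := hn

lemma tendsto_loglog_add_one_mul_exp_div (K : ℝ) :
    Tendsto (fun n : ℕ => (log (log n) + 1) * (exp (K * log (log n) ^ 2) / n)) atTop (𝓝 0) := by
  have hbound : Tendsto (fun n : ℕ => exp ((K + 1) * log (log n) ^ 2 - log n)) atTop (𝓝 0) :=
    tendsto_exp_atBot.comp ((tendsto_mul_log_sq_sub_atBot (K + 1)).comp
      (tendsto_log_atTop.comp tendsto_natCast_atTop_atTop))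
  refine squeeze_zero' ?_ ?_ hbound
  · filter_upwards [tendsto_loglog_atTop.eventually_ge_atTop 0] with n hL
    positivity
  · filter_upwards [tendsto_loglog_atTop.eventually_ge_atTop 1, eventually_gt_atTop 0]
      with n hL hn
    have hn' : (0 : ℝ) < n := by exact_mod_cast hn
    have hL1 : log (log n) + 1 ≤ exp (log (log n) ^ 2) :=
      (add_one_le_exp _).trans (exp_le_exp.mpr (by nlinarith))
    calc (log (log n) + 1) * (exp (K * log (log n) ^ 2) / n)
        ≤ exp (log (log n) ^ 2) * (exp (K * log (log n) ^ 2) / n) := by gcongr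
      _ = exp ((K + 1) * log (log n) ^ 2 - log n) := by
        rw [exp_sub, exp_log hn', add_mul, one_mul, exp_add]
        ring

lemma tendsto_pow_floor_loglog_div {c : ℝ} (hc0 : 0 ≤ c) (hc1 : c < 1) :
    Tendsto (fun n : ℕ => c ^ (⌊log (log n)⌋₊ + 1) / (1 - c)) atTop (𝓝 0) := by
  have hexp : Tendsto (fun n : ℕ => ⌊log (log n)⌋₊ + 1) atTop atTop :=
    (tendsto_add_atTop_nat 1).comp (tendsto_nat_floor_atTop.comp tendsto_loglog_atTop)
  simpa using ((tendsto_pow_atTop_nhds_zero_of_lt_one hc0 hc1).comp hexp).div_const (1 - c)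

theorem statement_6_general (k : ℕ) (hk : 3 ≤ k) (ξ ck : ℝ)
    (hξuniq : ∀ y : ℝ, 0 < y →
      (k : ℝ) = y * (1 - Real.exp (-y)) / (1 - Real.exp (-y) - y * Real.exp (-y)) → y = ξ)
    (hck : ck = ξ / (k * (1 - Real.exp (-ξ)) ^ (k - 1)))
    (m : ℕ → ℕ) (hm : ∀ n : ℕ, (m n : ℝ) ≤ ck * n) :
    Tendsto (fun n : ℕ => probStar n (m n) k (fun ω => PropE ω)) atTop (nhds 1) := by
  obtain ⟨hc0, hc1⟩ := ck_mem_Ioo hk hξuniq hck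
  have hfail : Tendsto (fun n => probStar n (m n) k (fun ω => ¬ PropE ω)) atTop (𝓝 0) := by
    have hbound := (tendsto_loglog_add_one_mul_exp_div (k * (k - 1))).add
      (tendsto_pow_floor_loglog_div hc0.le hc1)
    rw [add_zero] at hbound
    refine squeeze_zero' (Eventually.of_forall fun n => probStar_nonneg _) ?_ hbound
    filter_upwards [eventually_gt_atTop 0, tendsto_loglog_atTop.eventually_ge_atTop 0,
      eventually_mul_loglog_le (k - 1)] with n hn hL hLn
    exact probStar_not_PropE_le hn (by omega) hc0 hc1 (hm n) hL hLn
  refine Tendsto.congr' ?_ (by simpa using hfail.const_sub 1)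
  filter_upwards [eventually_gt_atTop 0] with n hn
  exact (eq_sub_of_add_eq (probStar_add_probStar_not hn _)).symm

/-- for `k ≥ 3` and `m ≤ c_k* n`, the probability that `H*_{n,m,k}` has
Property `𝓔` tends to `1` as `n → ∞`. -/
theorem statement_6 (k : ℕ) (hk : 3 ≤ k) (ξ ck : ℝ) (hξpos : 0 < ξ)
    (hξ : (k : ℝ) = ξ * (1 - Real.exp (-ξ)) / (1 - Real.exp (-ξ) - ξ * Real.exp (-ξ)))
    (hξuniq : ∀ y : ℝ, 0 < y →
      (k : ℝ) = y * (1 - Real.exp (-y)) / (1 - Real.exp (-y) - y * Real.exp (-y)) → y = ξ)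
    (hck : ck = ξ / (k * (1 - Real.exp (-ξ)) ^ (k - 1)))
    (m : ℕ → ℕ) (hm : ∀ n : ℕ, (m n : ℝ) ≤ ck * n) :
    Tendsto (fun n : ℕ => probStar n (m n) k (fun ω => PropE ω)) atTop (nhds 1) :=
  statement_6_general k hk ξ ck hξuniq hck m hm
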